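/- arXiv:0909.3479 — 2 statements merged into one kernel-verified Lean document; each statement's English description precedes it below -/
import Mathlib

section
/- Let S be a weak*-closed unital subspace of B(H) and π a weak*-continuous functional on S with ‖π‖ = 1. Suppose that for every weak*-continuous functional ρ on S, every ε ∈ (0,1), and every pair of vectors x, y there exist vectors x', y' with ‖π_err − [x'⊗y']‖ < ε, ‖x'‖, ‖y'‖ < (1+ε)‖π_err‖^{1/2} where π_err = ρ, and ‖[x'⊗y]‖ < ε, ‖[x⊗y']‖ < ε. Then, given α ∈ (0,1), one can construct sequences (x_k), (y_k) in H with x₀ = y₀ = 0 satisfying: ‖π − [x_k ⊗ y_k]‖ < α^{2k}, ‖x_k‖, ‖y_k‖ < (1+α)(1 + α + ⋯ + α^{k−1}), and ‖x_k − x_{k−1}‖, ‖y_k − y_{k−1}‖ < (1+α)α^{k−1}; consequently (x_k), (y_k) converge to vectors x, y with π = [x ⊗ y], ‖x‖ ≤ (1+α)/(1−α), and ‖y‖ ≤ (1+α)/(1−α). -/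
open scoped ComplexInnerProductSpace
open Filter Topology

/-! Correct the current error `ρ = π - [x ⊗ y]`, of norm at most `α^{2k}`, by adding an
approximate factorization `[x' ⊗ y']` of `ρ` with precision `ε = α^{2k+2}/3` whose cross terms
`[x' ⊗ y]`, `[x ⊗ y']` are also `ε`-small: the new error is below `3ε = α^{2k+2}`, while the
corrections have norm below `(1 + α) √‖ρ‖ ≤ (1 + α) α^k`. The corrections are thus geometrically
small, so both sequences converge, and the errors tend to `0`, so the limit factorizes `π`. -/

lemma sub_ten_add_add {H E : Type*} [Add H] [AddCommGroup E] {ten : H → H → E}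
    (hl : ∀ a b c, ten (a + b) c = ten a c + ten b c)
    (hr : ∀ a b c, ten a (b + c) = ten a b + ten a c) (π : E) (x y x' y' : H) :
    π - ten (x + x') (y + y') = π - ten x y - ten x' y' - ten x' y - ten x y' := by
  rw [hl, hr, hr]
  abel

section Approximation

variable {H E : Type*} [SeminormedAddCommGroup H] [SeminormedAddCommGroup E] {ten : H → H → E}

variable (ten) in
def HasApproxFactorizations : Prop :=
  ∀ (ρ : E) (ε : ℝ), 0 < ε → ε < 1 → ∀ x y : H, ∃ x' y' : H,
    ‖ρ - ten x' y'‖ < ε ∧ ‖x'‖ < (1 + ε) * √‖ρ‖ ∧ ‖y'‖ < (1 + ε) * √‖ρ‖ ∧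
    ‖ten x' y‖ < ε ∧ ‖ten x y'‖ < ε

lemma exists_correction (hl : ∀ a b c, ten (a + b) c = ten a c + ten b c)
    (hr : ∀ a b c, ten a (b + c) = ten a b + ten a c)
    (happrox : HasApproxFactorizations ten)
    {π : E} {α : ℝ} (hα0 : 0 < α) (hα1 : α < 1) (k : ℕ) {x y : H}
    (herr : ‖π - ten x y‖ ≤ α ^ (2 * k)) :
    ∃ x' y' : H, ‖x'‖ < (1 + α) * α ^ k ∧ ‖y'‖ < (1 + α) * α ^ k ∧
      ‖π - ten (x + x') (y + y')‖ < α ^ (2 * (k + 1)) := by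
  set ε := α ^ (2 * (k + 1)) / 3 with hε
  have hε0 : 0 < ε := by positivity
  have hεα : ε < α := by
    have : α ^ (2 * (k + 1)) ≤ α ^ 1 := pow_le_pow_of_le_one hα0.le hα1.le (by omega)
    rw [pow_one] at this
    linarith [hε]
  obtain ⟨x', y', h_approx, hx', hy', h_cross_x, h_cross_y⟩ :=
    happrox (π - ten x y) ε hε0 (hεα.trans hα1) x y
  have hsqrt : √‖π - ten x y‖ ≤ α ^ k :=
    Real.sqrt_le_iff.2 ⟨by positivity, by rwa [← pow_mul, mul_comm]⟩
  have hcorr : ∀ z : H, ‖z‖ < (1 + ε) * √‖π - ten x y‖ → ‖z‖ < (1 + α) * α ^ k := fun z hz =>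
    hz.trans_le (mul_le_mul (by linarith) hsqrt (Real.sqrt_nonneg _) (by linarith))
  refine ⟨x', y', hcorr x' hx', hcorr y' hy', ?_⟩
  rw [sub_ten_add_add hl hr]
  calc ‖π - ten x y - ten x' y' - ten x' y - ten x y'‖
      ≤ ‖π - ten x y - ten x' y'‖ + ‖ten x' y‖ + ‖ten x y'‖ :=
        (norm_sub_le _ _).trans (add_le_add_left (norm_sub_le _ _) _)
    _ < ε + ε + ε := by gcongr
    _ = α ^ (2 * (k + 1)) := by rw [hε]; ring

lemma exists_approx_seq (hl : ∀ a b c, ten (a + b) c = ten a c + ten b c)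
    (hr : ∀ a b c, ten a (b + c) = ten a b + ten a c)
    (happrox : HasApproxFactorizations ten)
    {π : E} (hπ : ‖π‖ ≤ 1) {α : ℝ} (hα0 : 0 < α) (hα1 : α < 1) :
    ∃ x y : ℕ → H, x 0 = 0 ∧ y 0 = 0 ∧ ∀ k,
      ‖π - ten (x k) (y k)‖ ≤ α ^ (2 * k) ∧
      ‖π - ten (x (k + 1)) (y (k + 1))‖ < α ^ (2 * (k + 1)) ∧
      ‖x (k + 1) - x k‖ < (1 + α) * α ^ k ∧ ‖y (k + 1) - y k‖ < (1 + α) * α ^ k := by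
  have hnext : ∀ k (p : H × H), ∃ q : H × H, ‖π - ten p.1 p.2‖ ≤ α ^ (2 * k) →
      ‖q.1 - p.1‖ < (1 + α) * α ^ k ∧ ‖q.2 - p.2‖ < (1 + α) * α ^ k ∧
      ‖π - ten q.1 q.2‖ < α ^ (2 * (k + 1)) := by
    intro k p
    by_cases herr : ‖π - ten p.1 p.2‖ ≤ α ^ (2 * k)
    · obtain ⟨x', y', hx', hy', hnew⟩ := exists_correction hl hr happrox hα0 hα1 k herr
      exact ⟨(p.1 + x', p.2 + y'), fun _ => by simpa using ⟨hx', hy', hnew⟩⟩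
    · exact ⟨p, fun h => absurd h herr⟩
  choose next hnext using hnext
  let seq : ℕ → H × H := fun k => Nat.rec (motive := fun _ => H × H) (0, 0) next k
  have hseq : ∀ k, ‖π - ten (seq k).1 (seq k).2‖ ≤ α ^ (2 * k) := by
    intro k
    induction k with
    | zero =>
      have hzero : ten 0 0 = 0 := by simpa using hl 0 0 0
      simpa [seq, hzero] using hπ
    | succ k ih => exact (hnext k (seq k) ih).2.2.le
  exact ⟨fun k => (seq k).1, fun k => (seq k).2, rfl, rfl, fun k =>
    ⟨hseq k, (hnext k (seq k) (hseq k)).2.2, (hnext k (seq k) (hseq k)).1,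
      (hnext k (seq k) (hseq k)).2.1⟩⟩

end Approximation

lemma norm_sub_lt_sum_of_norm_succ_sub_lt {H : Type*} [SeminormedAddCommGroup H] {x : ℕ → H}
    {d : ℕ → ℝ} (h : ∀ i, ‖x (i + 1) - x i‖ < d i) {k : ℕ} (hk : 0 < k) :
    ‖x k - x 0‖ < ∑ i ∈ Finset.range k, d i := by
  rw [← Finset.sum_range_sub]
  exact (norm_sum_le _ _).trans_lt
    (Finset.sum_lt_sum_of_nonempty (Finset.nonempty_range_iff.2 hk.ne') fun i _ => h i)

lemma exists_tendsto_of_norm_sub_le_geometric {H : Type*} [SeminormedAddCommGroup H]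
    [CompleteSpace H] {x : ℕ → H} (hx0 : x 0 = 0) {C r : ℝ} (hr : r < 1)
    (h : ∀ n, ‖x (n + 1) - x n‖ ≤ C * r ^ n) :
    ∃ l, Tendsto x atTop (𝓝 l) ∧ ‖l‖ ≤ C / (1 - r) := by
  have hdist : ∀ n, dist (x n) (x (n + 1)) ≤ C * r ^ n := fun n => by
    rw [dist_comm, dist_eq_norm]
    exact h n
  obtain ⟨l, hl⟩ := cauchySeq_tendsto_of_complete (cauchySeq_of_le_geometric r C hr hdist)
  refine ⟨l, hl, ?_⟩
  simpa [hx0] using dist_le_of_le_geometric_of_tendsto₀ r C hr hdist hl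

section VectorFunctional

variable {H : Type*} [NormedAddCommGroup H] [InnerProductSpace ℂ H]
  {S : Submodule ℂ (H →L[ℂ] H)} {ten : H → H → StrongDual ℂ S}

lemma ten_add_left (hten : ∀ (x y : H) (A : S), ten x y A = ⟪(A : H →L[ℂ] H) x, y⟫)
    (a b c : H) : ten (a + b) c = ten a c + ten b c := by
  ext A
  simp [hten]

lemma ten_add_right (hten : ∀ (x y : H) (A : S), ten x y A = ⟪(A : H →L[ℂ] H) x, y⟫)
    (a b c : H) : ten a (b + c) = ten a b + ten a c := by
  ext A
  simp [hten]

lemma eq_ten_of_tendsto [CompleteSpace H]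
    (hten : ∀ (x y : H) (A : S), ten x y A = ⟪(A : H →L[ℂ] H) x, y⟫)
    {π : StrongDual ℂ S} {x y : ℕ → H} {xl yl : H} (hx : Tendsto x atTop (𝓝 xl))
    (hy : Tendsto y atTop (𝓝 yl))
    (herr : Tendsto (fun k => ‖π - ten (x k) (y k)‖) atTop (𝓝 0)) :
    π = ten xl yl := by
  have hπ : Tendsto (fun k => ten (x k) (y k)) atTop (𝓝 π) :=
    (tendsto_iff_norm_sub_tendsto_zero (E := StrongDual ℂ S)).2
      (herr.congr fun k => norm_sub_rev π (ten (x k) (y k)))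
  ext A
  refine tendsto_nhds_unique (((continuous_eval_const A).tendsto π).comp hπ) ?_
  simp only [Function.comp_def, hten]
  exact ((A : H →L[ℂ] H).continuous.tendsto xl |>.comp hx).inner hy

end VectorFunctional

theorem stmt7_general {H : Type*} [NormedAddCommGroup H] [InnerProductSpace ℂ H] [CompleteSpace H]
    (S : Submodule ℂ (H →L[ℂ] H))
    (ten : H → H → StrongDual ℂ S)
    (hten : ∀ (x y : H) (A : S), ten x y A = ⟪(A : H →L[ℂ] H) x, y⟫)
    (π : StrongDual ℂ S) (hπ : ‖π‖ = 1)
    (happrox : ∀ (ρ : StrongDual ℂ S) (ε : ℝ), 0 < ε → ε < 1 → ∀ x y : H,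
      ∃ x' y' : H,
        ‖ρ - ten x' y'‖ < ε ∧
        ‖x'‖ < (1 + ε) * Real.sqrt ‖ρ‖ ∧ ‖y'‖ < (1 + ε) * Real.sqrt ‖ρ‖ ∧
        ‖ten x' y‖ < ε ∧ ‖ten x y'‖ < ε)
    (α : ℝ) (hα0 : 0 < α) (hα1 : α < 1) :
    ∃ x y : ℕ → H, x 0 = 0 ∧ y 0 = 0 ∧
      (∀ k : ℕ, 1 ≤ k →
        ‖π - ten (x k) (y k)‖ < α ^ (2 * k) ∧
        ‖x k‖ < (1 + α) * ∑ i ∈ Finset.range k, α ^ i ∧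
        ‖y k‖ < (1 + α) * ∑ i ∈ Finset.range k, α ^ i ∧
        ‖x k - x (k - 1)‖ < (1 + α) * α ^ (k - 1) ∧
        ‖y k - y (k - 1)‖ < (1 + α) * α ^ (k - 1)) ∧
      ∃ xl yl : H, Tendsto x atTop (𝓝 xl) ∧ Tendsto y atTop (𝓝 yl) ∧
        π = ten xl yl ∧ ‖xl‖ ≤ (1 + α) / (1 - α) ∧ ‖yl‖ ≤ (1 + α) / (1 - α) := by
  -- `by exact` postpones `happrox` until the norm instance on `StrongDual ℂ S` is fixed.
  obtain ⟨x, y, hx0, hy0, hseq⟩ := exists_approx_seq (ten := ten) (ten_add_left hten)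
    (ten_add_right hten) (by exact happrox) hπ.le hα0 hα1
  have hx_step k := (hseq k).2.2.1
  have hy_step k := (hseq k).2.2.2
  obtain ⟨xl, hxl, hxl_le⟩ :=
    exists_tendsto_of_norm_sub_le_geometric hx0 hα1 fun k => (hx_step k).le
  obtain ⟨yl, hyl, hyl_le⟩ :=
    exists_tendsto_of_norm_sub_le_geometric hy0 hα1 fun k => (hy_step k).le
  have herr : Tendsto (fun k => ‖π - ten (x k) (y k)‖) atTop (𝓝 0) := by
    refine squeeze_zero (fun k => norm_nonneg (π - ten (x k) (y k))) (fun k => (hseq k).1) ?_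
    simpa only [pow_mul] using tendsto_pow_atTop_nhds_zero_of_lt_one (by positivity)
      (pow_lt_one₀ hα0.le hα1 two_ne_zero)
  refine ⟨x, y, hx0, hy0, fun k hk => ?_, xl, yl, hxl, hyl, eq_ten_of_tendsto hten hxl hyl herr,
    hxl_le, hyl_le⟩
  obtain ⟨j, rfl⟩ : ∃ j, k = j + 1 := ⟨k - 1, by omega⟩
  have hsum (z : ℕ → H) (hz0 : z 0 = 0) (hz : ∀ i, ‖z (i + 1) - z i‖ < (1 + α) * α ^ i) :
      ‖z (j + 1)‖ < (1 + α) * ∑ i ∈ Finset.range (j + 1), α ^ i := by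
    simpa [hz0, Finset.mul_sum] using norm_sub_lt_sum_of_norm_succ_sub_lt hz j.succ_pos
  simp only [add_tsub_cancel_right]
  exact ⟨(hseq j).2.1, hsum x hx0 hx_step, hsum y hy0 hy_step, hx_step j, hy_step j⟩

/-- The iterative "dual algebra" construction. Let `S` be a (weak*-, in particular
norm-) closed unital subspace of `B(H)`, `ten x y` the functional `A ↦ ⟪Ax, y⟫` on `S`,
and `π` a functional of norm `1`.  If every functional `ρ` on `S` admits, for every
`ε ∈ (0,1)` and vectors `x, y`, an approximation `[x'⊗y']` with
`‖ρ − [x'⊗y']‖ < ε`, `‖x'‖, ‖y'‖ < (1+ε)‖ρ‖^{1/2}`, `‖[x'⊗y]‖ < ε`, `‖[x⊗y']‖ < ε`,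
then for every `α ∈ (0,1)` there are sequences `(x_k), (y_k)` starting at `0` with
`‖π − [x_k⊗y_k]‖ < α^{2k}`, `‖x_k‖, ‖y_k‖ < (1+α)(1+α+⋯+α^{k-1})`,
`‖x_k − x_{k-1}‖, ‖y_k − y_{k-1}‖ < (1+α)α^{k-1}`, which converge to vectors `x, y` with
`π = [x⊗y]` and `‖x‖, ‖y‖ ≤ (1+α)/(1−α)`. -/
theorem stmt7 {H : Type*} [NormedAddCommGroup H] [InnerProductSpace ℂ H] [CompleteSpace H]
    (S : Submodule ℂ (H →L[ℂ] H))
    (hclosed : IsClosed (S : Set (H →L[ℂ] H)))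
    (hone : (1 : H →L[ℂ] H) ∈ S)
    (ten : H → H → StrongDual ℂ S)
    (hten : ∀ (x y : H) (A : S), ten x y A = ⟪(A : H →L[ℂ] H) x, y⟫)
    (π : StrongDual ℂ S) (hπ : ‖π‖ = 1)
    (happrox : ∀ (ρ : StrongDual ℂ S) (ε : ℝ), 0 < ε → ε < 1 → ∀ x y : H,
      ∃ x' y' : H,
        ‖ρ - ten x' y'‖ < ε ∧
        ‖x'‖ < (1 + ε) * Real.sqrt ‖ρ‖ ∧ ‖y'‖ < (1 + ε) * Real.sqrt ‖ρ‖ ∧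
        ‖ten x' y‖ < ε ∧ ‖ten x y'‖ < ε)
    (α : ℝ) (hα0 : 0 < α) (hα1 : α < 1) :
    ∃ x y : ℕ → H, x 0 = 0 ∧ y 0 = 0 ∧
      (∀ k : ℕ, 1 ≤ k →
        ‖π - ten (x k) (y k)‖ < α ^ (2 * k) ∧
        ‖x k‖ < (1 + α) * ∑ i ∈ Finset.range k, α ^ i ∧
        ‖y k‖ < (1 + α) * ∑ i ∈ Finset.range k, α ^ i ∧
        ‖x k - x (k - 1)‖ < (1 + α) * α ^ (k - 1) ∧
        ‖y k - y (k - 1)‖ < (1 + α) * α ^ (k - 1)) ∧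
      ∃ xl yl : H, Tendsto x atTop (𝓝 xl) ∧ Tendsto y atTop (𝓝 yl) ∧
        π = ten xl yl ∧ ‖xl‖ ≤ (1 + α) / (1 - α) ∧ ‖yl‖ ≤ (1 + α) / (1 - α) :=
  stmt7_general S ten hten π hπ happrox α hα0 hα1
end

section
/- Let S₁,...,Sₙ be isometries on H with pairwise orthogonal ranges, S the algebra they generate with identity, S₀ the ideal generated by the Sᵢ. If z is a unit vector in S[x] ⊖ S₀[x] for some vector x, then (S_w z, z) = 0 for every nonempty word w, and moreover (S_u z, S_v z) = 0 for all distinct words u, v; hence z is a wandering vector. -/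
open scoped ComplexInnerProductSpace InnerProductSpace

/-! `z ∈ S[x]` gives `S_v z ∈ S₀[x]` for every nonempty word `v`, so `z ⊥ S₀[x]` yields
`⟪z, S_v z⟫ = 0`. Since `S_a^* S_b = δ_{ab}`, a common leading letter of two words cancels,
so `⟪S_u z, S_v z⟫` reduces to `0` or to `⟪z, S_w z⟫` (or its conjugate) with `w` nonempty;
and each `S_w` is an isometry, so the vectors `S_w z` are orthonormal. -/

section CuntzToeplitz

variable {𝕜 E ι : Type*} [RCLike 𝕜] [NormedAddCommGroup E] [InnerProductSpace 𝕜 E]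
  [CompleteSpace E] [DecidableEq ι] {S : ι → E →L[𝕜] E}

theorem inner_apply_apply_eq_ite
    (hS : ∀ i j, ContinuousLinearMap.adjoint (S i) ∘L S j = if i = j then 1 else 0)
    (a b : ι) (p q : E) : ⟪S a p, S b q⟫_𝕜 = if a = b then ⟪p, q⟫_𝕜 else 0 := by
  rw [← ContinuousLinearMap.adjoint_inner_right, ← ContinuousLinearMap.comp_apply, hS a b]
  split_ifs <;> simp

theorem inner_wordOp_cons_cons
    (hS : ∀ i j, ContinuousLinearMap.adjoint (S i) ∘L S j = if i = j then 1 else 0)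
    (a b : ι) (u v : List ι) (p q : E) :
    ⟪((a :: u).map S).prod p, ((b :: v).map S).prod q⟫_𝕜 =
      if a = b then ⟪(u.map S).prod p, (v.map S).prod q⟫_𝕜 else 0 := by
  simp only [List.map_cons, List.prod_cons, mul_apply_eq_comp]
  exact inner_apply_apply_eq_ite hS a b _ _

theorem inner_wordOp_wordOp_self
    (hS : ∀ i j, ContinuousLinearMap.adjoint (S i) ∘L S j = if i = j then 1 else 0)
    (w : List ι) (p q : E) : ⟪(w.map S).prod p, (w.map S).prod q⟫_𝕜 = ⟪p, q⟫_𝕜 := by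
  induction w with
  | nil => simp
  | cons a w ih => rw [inner_wordOp_cons_cons hS, if_pos rfl, ih]

theorem inner_wordOp_eq_zero_of_ne
    (hS : ∀ i j, ContinuousLinearMap.adjoint (S i) ∘L S j = if i = j then 1 else 0)
    {z : E} (hz : ∀ v : List ι, v ≠ [] → ⟪z, (v.map S).prod z⟫_𝕜 = 0) :
    ∀ u v : List ι, u ≠ v → ⟪(u.map S).prod z, (v.map S).prod z⟫_𝕜 = 0
  | [], [], h => absurd rfl h
  | [], b :: v, _ => by simpa using hz (b :: v) (List.cons_ne_nil _ _)
  | a :: u, [], _ => by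
    rw [inner_eq_zero_symm]
    simpa using hz (a :: u) (List.cons_ne_nil _ _)
  | a :: u, b :: v, h => by
    rw [inner_wordOp_cons_cons hS]
    split_ifs with hab
    · subst hab
      exact inner_wordOp_eq_zero_of_ne hS hz u v fun huv => h (huv ▸ rfl)
    · rfl

end CuntzToeplitz

theorem wordOp_mem_closure_span_nonempty {R M ι : Type*} [Semiring R] [AddCommMonoid M]
    [Module R M] [TopologicalSpace M] [ContinuousAdd M] [ContinuousConstSMul R M]
    (S : ι → M →L[R] M) (x : M) {v : List ι} (hv : v ≠ []) {y : M}
    (hy : y ∈ (Submodule.span R {u | ∃ w : List ι, u = (w.map S).prod x}).topologicalClosure) :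
    (v.map S).prod y ∈
      (Submodule.span R {u | ∃ w : List ι, w ≠ [] ∧ u = (w.map S).prod x}).topologicalClosure := by
  have hspan : Submodule.span R {u | ∃ w : List ι, u = (w.map S).prod x} ≤
      (Submodule.span R {u | ∃ w : List ι, w ≠ [] ∧ u = (w.map S).prod x}).comap
        ((v.map S).prod : M →ₗ[R] M) := by
    rw [Submodule.span_le]
    rintro _ ⟨w, rfl⟩
    refine Submodule.subset_span ⟨v ++ w, by simp [hv], ?_⟩
    simp [List.prod_append, mul_apply_eq_comp]
  exact map_mem_closure (v.map S).prod.continuous hy fun _ hu => hspan hu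

/-- If `z` is a unit vector in `S[x] ⊖ S₀[x]` (i.e. `z` lies in the closed span of
`{S_w x : w}` and is orthogonal to the closed span of `{S_w x : w ≠ ∅}`), then
`⟪S_w z, z⟫ = 0` for every nonempty word `w`, `⟪S_u z, S_v z⟫ = 0` for all distinct
words `u, v`, and hence `z` is a wandering vector. -/
theorem stmt9 {H : Type*} [NormedAddCommGroup H] [InnerProductSpace ℂ H] [CompleteSpace H]
    {n : ℕ} (S : Fin n → H →L[ℂ] H)
    (hS : ∀ i j, (ContinuousLinearMap.adjoint (S i)) ∘L (S j) =
      if i = j then (1 : H →L[ℂ] H) else 0)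
    (x z : H) (hz : ‖z‖ = 1)
    (hzS : z ∈ (Submodule.span ℂ
      {v : H | ∃ w : List (Fin n), v = ((w.map S).prod) x}).topologicalClosure)
    (hzperp : ∀ u ∈ (Submodule.span ℂ
      {v : H | ∃ w : List (Fin n), w ≠ [] ∧ v = ((w.map S).prod) x}).topologicalClosure,
      ⟪z, u⟫ = 0) :
    (∀ w : List (Fin n), w ≠ [] → ⟪((w.map S).prod) z, z⟫ = 0) ∧
    (∀ u v : List (Fin n), u ≠ v → ⟪((u.map S).prod) z, ((v.map S).prod) z⟫ = 0) ∧
    Orthonormal ℂ (fun w : List (Fin n) => ((w.map S).prod) z) := by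
  have hperp : ∀ v : List (Fin n), v ≠ [] → ⟪z, (v.map S).prod z⟫ = 0 := fun v hv =>
    hzperp _ (wordOp_mem_closure_span_nonempty S x hv hzS)
  have horth := inner_wordOp_eq_zero_of_ne hS hperp
  refine ⟨fun w hw => by simpa using horth w [] hw, horth, ?_⟩
  refine orthonormal_iff_ite.mpr fun u v => ?_
  split_ifs with huv
  · rw [huv, inner_wordOp_wordOp_self hS, inner_self_eq_norm_sq_to_K, hz]
    norm_num
  · exact horth u v huv
end
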